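/- arXiv:0909.2552 — 3 statements merged into one kernel-verified Lean document; each statement's English description precedes it below -/
import Mathlib

section
/- Let ⟨x, y⟩ = x₁y₁ + x₂y₂ − x₃y₃ be the Minkowski bilinear form on ℝ³. Let t, n, b ∈ ℝ³ satisfy ⟨t,t⟩ = −1, ⟨n,n⟩ = 1, ⟨b,b⟩ = 1, ⟨t,n⟩ = ⟨t,b⟩ = ⟨n,b⟩ = 0. Let a, b₀ ∈ ℝ with a² + 4b₀ ≥ 0, let κ ≠ 0, r, v, β ∈ ℝ satisfy β² = ((a²/2) + b₀ + (a/2)·√(a² + 4b₀) + r²)·κ², let c₀ ∈ ℝ³, and set X = c₀ + (β/κ)·t + r·(cos(v)·n + sin(v)·b). Then ⟨X − c₀, X − c₀⟩ = −((a²/2) + b₀ + (a/2)·√(a² + 4b₀)). -/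
def mink (x y : Fin 3 → ℝ) : ℝ := x 0 * y 0 + x 1 * y 1 - x 2 * y 2

theorem mink_comm (x y : Fin 3 → ℝ) : mink x y = mink y x := by
  unfold mink; ring

theorem mink_add_left (x y z : Fin 3 → ℝ) : mink (x + y) z = mink x z + mink y z := by
  simp only [mink, Pi.add_apply]; ring

theorem mink_add_right (x y z : Fin 3 → ℝ) : mink x (y + z) = mink x y + mink x z := by
  rw [mink_comm, mink_add_left, mink_comm y, mink_comm z]

theorem mink_smul_left (c : ℝ) (x y : Fin 3 → ℝ) : mink (c • x) y = c * mink x y := by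
  simp only [mink, Pi.smul_apply, smul_eq_mul]; ring

theorem mink_smul_right (c : ℝ) (x y : Fin 3 → ℝ) : mink x (c • y) = c * mink x y := by
  rw [mink_comm, mink_smul_left, mink_comm]

theorem mink_self_of_orthonormal_frame {t n b : Fin 3 → ℝ}
    (htt : mink t t = -1) (hnn : mink n n = 1) (hbb : mink b b = 1)
    (htn : mink t n = 0) (htb : mink t b = 0) (hnb : mink n b = 0) (p q s : ℝ) :
    mink (p • t + q • n + s • b) (p • t + q • n + s • b) = -p ^ 2 + q ^ 2 + s ^ 2 := by
  simp only [mink_add_left, mink_add_right, mink_smul_left, mink_smul_right,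
    mink_comm n t, mink_comm b t, mink_comm b n, htt, hnn, hbb, htn, htb, hnb]
  ring

theorem mink_self_timelike_add_circle {t n b : Fin 3 → ℝ}
    (htt : mink t t = -1) (hnn : mink n n = 1) (hbb : mink b b = 1)
    (htn : mink t n = 0) (htb : mink t b = 0) (hnb : mink n b = 0) (p r v : ℝ) :
    mink (p • t + r • (Real.cos v • n + Real.sin v • b))
      (p • t + r • (Real.cos v • n + Real.sin v • b)) = r ^ 2 - p ^ 2 := by
  rw [smul_add, smul_smul, smul_smul, ← add_assoc,
    mink_self_of_orthonormal_frame htt hnn hbb htn htb hnb]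
  linear_combination r ^ 2 * Real.cos_sq_add_sin_sq v

theorem stmt_14_general (t n b : Fin 3 → ℝ)
    (htt : mink t t = -1) (hnn : mink n n = 1) (hbb : mink b b = 1)
    (htn : mink t n = 0) (htb : mink t b = 0) (hnb : mink n b = 0)
    (a b₀ : ℝ)
    (κ : ℝ) (hκ : κ ≠ 0) (r v β : ℝ)
    (hβ : β ^ 2 = (a ^ 2 / 2 + b₀ + (a / 2) * Real.sqrt (a ^ 2 + 4 * b₀) + r ^ 2) * κ ^ 2)
    (c₀ : Fin 3 → ℝ) (X : Fin 3 → ℝ)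
    (hX : X = c₀ + (β / κ) • t + r • (Real.cos v • n + Real.sin v • b)) :
    mink (X - c₀) (X - c₀)
      = -(a ^ 2 / 2 + b₀ + (a / 2) * Real.sqrt (a ^ 2 + 4 * b₀)) := by
  have hp : (β / κ) ^ 2 = a ^ 2 / 2 + b₀ + (a / 2) * Real.sqrt (a ^ 2 + 4 * b₀) + r ^ 2 := by
    rw [div_pow, hβ]
    field_simp
  rw [hX, add_assoc, add_sub_cancel_left,
    mink_self_timelike_add_circle htt hnn hbb htn htb hnb, hp]
  ring

/-- With an orthonormal Minkowski frame `{t, n, b}` (with `t` timelike), if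
`β² = ((a²/2) + b₀ + (a/2)√(a² + 4b₀) + r²)·κ²`, then the point
`X = c₀ + (β/κ)·t + r(cos v·n + sin v·b)` satisfies
`⟨X − c₀, X − c₀⟩ = −((a²/2) + b₀ + (a/2)√(a² + 4b₀))`. -/
theorem stmt_14 (t n b : Fin 3 → ℝ)
    (htt : mink t t = -1) (hnn : mink n n = 1) (hbb : mink b b = 1)
    (htn : mink t n = 0) (htb : mink t b = 0) (hnb : mink n b = 0)
    (a b₀ : ℝ) (hab : 0 ≤ a ^ 2 + 4 * b₀)
    (κ : ℝ) (hκ : κ ≠ 0) (r v β : ℝ)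
    (hβ : β ^ 2 = (a ^ 2 / 2 + b₀ + (a / 2) * Real.sqrt (a ^ 2 + 4 * b₀) + r ^ 2) * κ ^ 2)
    (c₀ : Fin 3 → ℝ) (X : Fin 3 → ℝ)
    (hX : X = c₀ + (β / κ) • t + r • (Real.cos v • n + Real.sin v • b)) :
    mink (X - c₀) (X - c₀)
      = -(a ^ 2 / 2 + b₀ + (a / 2) * Real.sqrt (a ^ 2 + 4 * b₀)) :=
  stmt_14_general t n b htt hnn hbb htn htb hnb a b₀ κ hκ r v β hβ c₀ X hX
end

section
/- Let ⟨x, y⟩ = x₁y₁ + x₂y₂ − x₃y₃ be the Minkowski bilinear form on ℝ³. Let t, n, b ∈ ℝ³ satisfy ⟨t,t⟩ = 0, ⟨n,n⟩ = 1, ⟨b,b⟩ = 0, ⟨t,n⟩ = 0, ⟨n,b⟩ = 0, ⟨t,b⟩ = 1. Let a ≠ 0, r > 0, v ∈ ℝ, c₀ ∈ ℝ³, and set X = c₀ + (r/(4a²))·t − (1/(2r))·b + v·n + r·v²·t. Then ⟨X − c₀, X − c₀⟩ = −1/(4a²); that is, X lies on the pseudohyperbolic surface of radius 1/(2|a|)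 centered at c₀. -/
/-!
In a null frame the Minkowski square of `α t + β b + γ n` is `2αβ + γ²`. Here
`X - c₀ = (r/(4a²) + r v²) t - (1/(2r)) b + v n`, so the square is
`-1/(4a²) - v² + v² = -1/(4a²)`: the term `r v² t` exactly compensates the `n`-component.
-/

open LinearMap (BilinForm)

namespace LinearMap.BilinForm

variable {R M : Type*} [CommRing R] [AddCommGroup M] [Module R M]

theorem apply_nullFrame_combination (B : BilinForm R M) (hB : B.IsSymm) {t n b : M}
    (htt : B t t = 0) (hnn : B n n = 1) (hbb : B b b = 0)
    (htn : B t n = 0) (hnb : B n b = 0) (htb : B t b = 1) (α β γ : R) :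
    B (α • t + β • b + γ • n) (α • t + β • b + γ • n) = 2 * α * β + γ ^ 2 := by
  have hbt : B b t = 1 := by rw [hB.eq, htb]
  have hnt : B n t = 0 := by rw [hB.eq, htn]
  have hbn : B b n = 0 := by rw [hB.eq, hnb]
  simp only [map_add, map_smul, LinearMap.add_apply, LinearMap.smul_apply, smul_eq_mul,
    htt, hnn, hbb, htn, hnb, htb, hbt, hnt, hbn]
  ring

end LinearMap.BilinForm

def minkForm : LinearMap.BilinForm ℝ (Fin 3 → ℝ) :=
  LinearMap.mk₂ ℝ mink
    (fun _ _ _ => by simp only [mink, Pi.add_apply]; ring)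
    (fun _ _ _ => by simp only [mink, Pi.smul_apply, smul_eq_mul]; ring)
    (fun _ _ _ => by simp only [mink, Pi.add_apply]; ring)
    (fun _ _ _ => by simp only [mink, Pi.smul_apply, smul_eq_mul]; ring)

@[simp]
theorem minkForm_apply (x y : Fin 3 → ℝ) : minkForm x y = mink x y := rfl

theorem minkForm_isSymm : minkForm.IsSymm :=
  ⟨fun x y => by simp only [minkForm_apply, mink]; ring⟩

theorem stmt_15_general (t n b : Fin 3 → ℝ)
    (htt : mink t t = 0) (hnn : mink n n = 1) (hbb : mink b b = 0)
    (htn : mink t n = 0) (hnb : mink n b = 0) (htb : mink t b = 1)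
    (a : ℝ) (r : ℝ) (hr : 0 < r) (v : ℝ)
    (c₀ : Fin 3 → ℝ) (X : Fin 3 → ℝ)
    (hX : X = c₀ + (r / (4 * a ^ 2)) • t - (1 / (2 * r)) • b + v • n
        + (r * v ^ 2) • t) :
    mink (X - c₀) (X - c₀) = -(1 / (4 * a ^ 2)) := by
  have hXc : X - c₀ = (r / (4 * a ^ 2) + r * v ^ 2) • t + (-(1 / (2 * r))) • b + v • n := by
    rw [hX]
    module
  rw [hXc, ← minkForm_apply,
    minkForm.apply_nullFrame_combination minkForm_isSymm htt hnn hbb htn hnb htb]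
  field_simp
  ring

/-- With a null Frenet-type frame `{t, n, b}` (`t, b` lightlike, `⟨t,b⟩ = 1`,
`n` unit spacelike orthogonal to both), the point
`X = c₀ + (r/(4a²))·t − (1/(2r))·b + v·n + r·v²·t` satisfies
`⟨X − c₀, X − c₀⟩ = −1/(4a²)`. -/
theorem stmt_15 (t n b : Fin 3 → ℝ)
    (htt : mink t t = 0) (hnn : mink n n = 1) (hbb : mink b b = 0)
    (htn : mink t n = 0) (hnb : mink n b = 0) (htb : mink t b = 1)
    (a : ℝ) (ha : a ≠ 0) (r : ℝ) (hr : 0 < r) (v : ℝ)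
    (c₀ : Fin 3 → ℝ) (X : Fin 3 → ℝ)
    (hX : X = c₀ + (r / (4 * a ^ 2)) • t - (1 / (2 * r)) • b + v • n
        + (r * v ^ 2) • t) :
    mink (X - c₀) (X - c₀) = -(1 / (4 * a ^ 2)) :=
  stmt_15_general t n b htt hnn hbb htn hnb htb a r hr v c₀ X hX
end

section
/- Let ⟨x, y⟩ = x₁y₁ + x₂y₂ − x₃y₃ be the Minkowski bilinear form on ℝ³. Let t, n, b ∈ ℝ³ satisfy ⟨t,t⟩ = 0, ⟨n,n⟩ = 1, ⟨b,b⟩ = 0, ⟨t,n⟩ = 0, ⟨n,b⟩ = 0, ⟨t,b⟩ = 1. Let a, b₀ ∈ ℝ with a² + 4b₀ ≥ 0, let r > 0, v ∈ ℝ, c₀ ∈ ℝ³, set M = (a² + 2b₀ − a·√(a² + 4b₀))/2, and set X = c₀ + M·r·t − (1/(2r))·b + v·n + r·v²·t. Then ⟨X − c₀, X − c₀⟩ = −M. -/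
/-!
In the null frame the quadratic form of `α t + β b + γ n` is `2αβ + γ²`. For `X − c₀` the
coefficients are `α = r(M + v²)`, `β = −1/(2r)`, `γ = v`, so `2αβ = −(M + v²)` and the `v²`
terms cancel.
-/

theorem mink_null_frame_combination {t n b : Fin 3 → ℝ}
    (htt : mink t t = 0) (hnn : mink n n = 1) (hbb : mink b b = 0)
    (htn : mink t n = 0) (hnb : mink n b = 0) (htb : mink t b = 1) (α β γ : ℝ) :
    mink (α • t + β • b + γ • n) (α • t + β • b + γ • n) = 2 * α * β + γ ^ 2 := by
  simp only [mink, Pi.add_apply, Pi.smul_apply, smul_eq_mul] at *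
  linear_combination α ^ 2 * htt + γ ^ 2 * hnn + β ^ 2 * hbb + 2 * α * γ * htn
    + 2 * β * γ * hnb + 2 * α * β * htb

theorem stmt_16_general (t n b : Fin 3 → ℝ)
    (htt : mink t t = 0) (hnn : mink n n = 1) (hbb : mink b b = 0)
    (htn : mink t n = 0) (hnb : mink n b = 0) (htb : mink t b = 1)
    (r : ℝ) (hr : 0 < r) (v : ℝ) (c₀ : Fin 3 → ℝ)
    (M : ℝ)
    (X : Fin 3 → ℝ)
    (hX : X = c₀ + (M * r) • t - (1 / (2 * r)) • b + v • n + (r * v ^ 2) • t) :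
    mink (X - c₀) (X - c₀) = -M := by
  have hX_frame : X - c₀ = (r * (M + v ^ 2)) • t + (-(1 / (2 * r))) • b + v • n := by
    rw [hX]
    module
  rw [hX_frame, mink_null_frame_combination htt hnn hbb htn hnb htb]
  field_simp
  ring

/-- With a null Frenet-type frame `{t, n, b}` (`t, b` lightlike, `⟨t,b⟩ = 1`,
`n` unit spacelike orthogonal to both), set
`M = (a² + 2b₀ − a√(a² + 4b₀))/2`; then the point
`X = c₀ + M·r·t − (1/(2r))·b + v·n + r·v²·t` satisfies
`⟨X − c₀, X − c₀⟩ = −M`. -/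
theorem stmt_16 (t n b : Fin 3 → ℝ)
    (htt : mink t t = 0) (hnn : mink n n = 1) (hbb : mink b b = 0)
    (htn : mink t n = 0) (hnb : mink n b = 0) (htb : mink t b = 1)
    (a b₀ : ℝ) (hab : 0 ≤ a ^ 2 + 4 * b₀)
    (r : ℝ) (hr : 0 < r) (v : ℝ) (c₀ : Fin 3 → ℝ)
    (M : ℝ) (hM : M = (a ^ 2 + 2 * b₀ - a * Real.sqrt (a ^ 2 + 4 * b₀)) / 2)
    (X : Fin 3 → ℝ)
    (hX : X = c₀ + (M * r) • t - (1 / (2 * r)) • b + v • n + (r * v ^ 2) • t) :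
    mink (X - c₀) (X - c₀) = -M :=
  stmt_16_general t n b htt hnn hbb htn hnb htb r hr v c₀ M X hX
end
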